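/- arXiv:2405.18678 — 6 statements merged into one kernel-verified Lean document; each statement's English description precedes it below -/
import Mathlib

section
/- If x is an element of a finite group G with p-index p^m (i.e., the p-part of |G : C_G(x)| is p^m), and P is any Sylow p-subgroup of G, then there exists a conjugate z of x such that the index |P : P ∩ C_G(z)| equals p^m. -/
/-!
Let `C = C_G(x)` and choose a Sylow `p`-subgroup `R` of `G` with `R ∩ C` a Sylow `p`-subgroup
of `C`. Computing `|G : C ∩ R|` through `C` and through `R` gives
`|R : C ∩ R| · |G : R| = |C : C ∩ R| · |G : C|`, where `|G : R|` and `|C : C ∩ R|` are prime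
to `p`; as `|R : C ∩ R|` divides `|R|`, it is exactly the `p`-part of `|G : C|`. Conjugating by
some `g` carries `R` to `P` and `C` to `C_G(gxg⁻¹)`, preserving the relative index.
-/

open Pointwise

namespace Subgroup

variable {G : Type*} [Group G]

theorem relIndex_mul_index_comm (H K : Subgroup G) :
    H.relIndex K * K.index = K.relIndex H * H.index := by
  rw [← inf_relIndex_right, relIndex_mul_index inf_le_right, ← inf_relIndex_left,
    relIndex_mul_index inf_le_left]

theorem centralizer_conj (g x : G) :
    centralizer {g * x * g⁻¹} = MulAut.conj g • centralizer {x} := by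
  ext y
  simp only [mem_pointwise_smul_iff_inv_smul_mem, mem_centralizer_singleton_iff,
    MulAut.smul_def, MulAut.conj_inv_apply]
  rw [← (MulAut.conj g⁻¹).injective.eq_iff]
  simp [mul_assoc]

end Subgroup

namespace Sylow

variable {G : Type*} [Group G] [Finite G] {p : ℕ} [Fact p.Prime]

theorem exists_relIndex_eq_pow_factorization_index (H : Subgroup G) :
    ∃ R : Sylow p G, H.relIndex R = p ^ H.index.factorization p := by
  obtain ⟨Q⟩ : Nonempty (Sylow p H) := inferInstance
  obtain ⟨R, hRQ⟩ := exists_comap_subtype_eq Q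
  have hindex : H.relIndex R * (R : Subgroup G).index = (Q : Subgroup H).index * H.index := by
    rw [H.relIndex_mul_index_comm, ← hRQ]
    rfl
  have hfac : (H.relIndex R).factorization p = H.index.factorization p := by
    have hne : H.relIndex R ≠ 0 := Subgroup.index_ne_zero_of_finite
    have := congrArg (fun n => n.factorization p) hindex
    rwa [Nat.factorization_mul hne Subgroup.index_ne_zero_of_finite,
      Nat.factorization_mul Subgroup.index_ne_zero_of_finite Subgroup.index_ne_zero_of_finite,
      Finsupp.add_apply, Finsupp.add_apply, Nat.factorization_eq_zero_of_not_dvd R.not_dvd_index,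
      Nat.factorization_eq_zero_of_not_dvd Q.not_dvd_index, add_zero, zero_add] at this
  obtain ⟨k, -, hk⟩ := (Nat.dvd_prime_pow Fact.out).mp
    (R.card_eq_multiplicity ▸ H.relIndex_dvd_card R)
  refine ⟨R, ?_⟩
  rw [← hfac, hk, Nat.factorization_pow_self Fact.out]

theorem exists_conj_smul_relIndex_eq_pow_factorization_index (H : Subgroup G) (P : Sylow p G) :
    ∃ g : G, (MulAut.conj g • H).relIndex P = p ^ H.index.factorization p := by
  obtain ⟨R, hR⟩ := exists_relIndex_eq_pow_factorization_index (p := p) H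
  obtain ⟨g, rfl⟩ := MulAction.exists_smul_eq G R P
  exact ⟨g, by rw [coe_subgroup_smul, Subgroup.relIndex_pointwise_smul, hR]⟩

end Sylow

theorem exists_conj_sylow_relindex_eq {G : Type*} [Group G] [Finite G] (p : ℕ)
    [Fact p.Prime] (x : G) (P : Sylow p G) (m : ℕ)
    (hm : ((Subgroup.centralizer {x}).index).factorization p = m) :
    ∃ z : G, IsConj x z ∧
      (Subgroup.centralizer {z}).relIndex (P : Subgroup G) = p ^ m := by
  obtain ⟨g, hg⟩ := Sylow.exists_conj_smul_relIndex_eq_pow_factorization_index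
    (Subgroup.centralizer {x}) P
  refine ⟨g * x * g⁻¹, isConj_iff.mpr ⟨g, rfl⟩, ?_⟩
  rw [Subgroup.centralizer_conj, hg, hm]
end

section
/- If z_1, …, z_s is a complete set of representatives of the conjugacy classes of a finite group G, then G is generated by z_1, …, z_s. -/
theorem closure_of_conjClass_reps_eq_top {G : Type*} [Group G] [Finite G]
    (s : Finset G) (hs : ∀ g : G, ∃! z, z ∈ s ∧ IsConj z g) :
    Subgroup.closure (s : Set G) = ⊤ := by
  classical
  have := Fintype.ofFinite G
  set H := Subgroup.closure (s : Set G) with hH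
  by_contra hne
  -- every element has a fixed point on G ⧸ H
  have hfix : ∀ g : G, ∃ x : G ⧸ H, g • x = x := by
    intro g
    obtain ⟨z, ⟨hzs, hzc⟩, -⟩ := hs g
    obtain ⟨c, hc⟩ := hzc
    refine ⟨(c : G), ?_⟩
    have hzH : z ∈ H := Subgroup.subset_closure hzs
    show ((g * c : G) : G ⧸ H) = (c : G ⧸ H)
    rw [QuotientGroup.eq]
    have : (g * c)⁻¹ * c = z⁻¹ := by
      rw [← hc]; group
    rw [this]
    exact inv_mem hzH
  have hnt : Nontrivial (G ⧸ H) := by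
    obtain ⟨g, hg⟩ : ∃ g, g ∉ H := by
      by_contra h
      push_neg at h
      exact hne ((Subgroup.eq_top_iff' H).mpr h)
    exact ⟨⟨(g : G ⧸ H), ((1 : G) : G ⧸ H), by
      intro h
      have hmem := QuotientGroup.eq.mp h
      simp only [mul_one, inv_mem_iff] at hmem
      exact hg hmem⟩⟩
  haveI : Fintype (G ⧸ H) := Fintype.ofFinite _
  haveI : Fintype (Quotient (MulAction.orbitRel G (G ⧸ H))) := Fintype.ofFinite _
  set F : G → ℕ := fun g => Fintype.card (MulAction.fixedBy (G ⧸ H) g) with hF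
  have hburn := MulAction.sum_card_fixedBy_eq_card_orbits_mul_card_group G (G ⧸ H)
  have hΩ : Fintype.card (Quotient (MulAction.orbitRel G (G ⧸ H))) = 1 := by
    rw [Fintype.card_eq_one_iff]
    refine ⟨Quotient.mk _ (((1 : G) : G ⧸ H)), fun ω => ?_⟩
    induction ω using Quotient.inductionOn with
    | h x =>
      apply Quotient.sound
      obtain ⟨g, hg⟩ := MulAction.exists_smul_eq G (((1 : G) : G ⧸ H)) x
      exact ⟨g, hg⟩
  rw [hΩ, one_mul] at hburn
  have hburn' : ∑ g : G, F g = Fintype.card G := hburn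
  have h1 : ∀ g : G, 1 ≤ F g := by
    intro g
    obtain ⟨x, hx⟩ := hfix g
    exact Fintype.card_pos_iff.mpr ⟨⟨x, hx⟩⟩
  have h2 : 2 ≤ F 1 := by
    have huniv : MulAction.fixedBy (G ⧸ H) (1 : G) = Set.univ := by
      ext x; simp [MulAction.fixedBy]
    have heq : F 1 = Fintype.card (G ⧸ H) := by
      rw [hF]
      simp only [huniv]
      exact Fintype.card_congr (Equiv.Set.univ _)
    rw [heq]
    exact Fintype.one_lt_card
  have hsplit : ∑ g : G, F g = F 1 + ∑ g ∈ Finset.univ.erase 1, F g :=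
    (Finset.add_sum_erase _ F (Finset.mem_univ 1)).symm
  have hrest : (Finset.univ.erase (1 : G)).card ≤ ∑ g ∈ Finset.univ.erase 1, F g := by
    have := Finset.sum_le_sum (f := fun _ : G => 1) (g := F)
      (fun g (_ : g ∈ Finset.univ.erase 1) => h1 g)
    rwa [Finset.sum_const, smul_eq_mul, mul_one] at this
  have hcard : (Finset.univ.erase (1 : G)).card = Fintype.card G - 1 := by
    rw [Finset.card_erase_of_mem (Finset.mem_univ 1), Finset.card_univ]
  have hpos : 1 ≤ Fintype.card G := Fintype.card_pos
  omega
end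

section
/- If H is a subgroup of a finite p-group G with index |G : H| = p^m, then the m-th iterated Frattini subgroup Φ_m(G) is contained in H. -/
/-- The iterated Frattini series of a subgroup, realized as subgroups of the
ambient group: `frattiniIter H 0 = H` and
`frattiniIter H (m+1) = Φ(frattiniIter H m)`. -/
def frattiniIter {G : Type*} [Group G] (H : Subgroup G) : ℕ → Subgroup G
  | 0 => H
  | (m + 1) => (frattini (frattiniIter H m)).map (frattiniIter H m).subtype

/-!
Induction on `m`. A subgroup `H` of index `p ^ (m + 1)` in a `p`-group lies with index `p` in a
subgroup `K` of index `p ^ m`, and `Φ_m(G) ≤ K` by induction. Then `H ∩ Φ_m(G)` has index in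
`Φ_m(G)` a power of `p` that is at most `|K : H| = p`, so it is `Φ_m(G)` itself or a maximal
subgroup of it; either way it contains `Φ(Φ_m(G)) = Φ_{m+1}(G)`.
-/

namespace Subgroup

variable {G : Type*} [Group G] {p : ℕ}

theorem isCoatom_of_index_eq_prime (hp : p.Prime) {H : Subgroup G} (hH : H.index = p) :
    IsCoatom H := by
  refine ⟨fun hHtop => hp.ne_one (by rw [← hH, hHtop, index_top]), fun K hHK => ?_⟩
  rcases (Nat.dvd_prime hp).mp (hH ▸ index_dvd_of_le hHK.le) with hK | hK
  · exact index_eq_one.mp hK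
  · have hrel : H.relIndex K = 1 := by
      have := relIndex_mul_index hHK.le
      rwa [hH, hK, Nat.mul_eq_right hp.ne_zero] at this
    exact absurd (le_antisymm hHK.le (relIndex_eq_one.mp hrel)) hHK.ne

theorem frattini_le_of_index_dvd_prime (hp : p.Prime) {H : Subgroup G} (hH : H.index ∣ p) :
    frattini G ≤ H := by
  rcases (Nat.dvd_prime hp).mp hH with hH | hH
  · simp [index_eq_one.mp hH]
  · exact frattini_le_coatom (isCoatom_of_index_eq_prime hp hH)

theorem map_subtype_frattini_le_of_relIndex_dvd_prime (hp : p.Prime) {H L : Subgroup G}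
    (hHL : H.relIndex L ∣ p) : (frattini L).map L.subtype ≤ H :=
  calc (frattini L).map L.subtype ≤ (H.subgroupOf L).map L.subtype :=
        map_mono (frattini_le_of_index_dvd_prime hp hHL)
    _ = H ⊓ L := subgroupOf_map_subtype H L
    _ ≤ H := inf_le_left

end Subgroup

namespace IsPGroup

open Subgroup

variable {G : Type*} [Group G] [Finite G] {p : ℕ} [Fact p.Prime]

theorem relIndex_dvd_relIndex_of_le (hG : IsPGroup p G) (H : Subgroup G) {K L : Subgroup G}
    (hKL : K ≤ L) : H.relIndex K ∣ H.relIndex L := by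
  obtain ⟨a, ha⟩ := (hG.to_subgroup K).index (H.subgroupOf K)
  obtain ⟨b, hb⟩ := (hG.to_subgroup L).index (H.subgroupOf L)
  have hle : H.relIndex K ≤ H.relIndex L := relIndex_le_of_le_right hKL index_ne_zero_of_finite
  rw [relIndex, relIndex, ha, hb] at hle ⊢
  exact pow_dvd_pow p ((Nat.pow_le_pow_iff_right (Fact.out : p.Prime).one_lt).mp hle)

theorem exists_relIndex_eq_prime (hG : IsPGroup p G) {H : Subgroup G} (hH : H ≠ ⊤) :
    ∃ K : Subgroup G, H ≤ K ∧ H.relIndex K = p := by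
  have hp : p.Prime := Fact.out
  obtain ⟨n, hn⟩ := iff_card.mp (hG.to_subgroup H)
  obtain ⟨k, hk⟩ := hG.index H
  have hk0 : k ≠ 0 := by rintro rfl; exact hH (index_eq_one.mp hk)
  have hdvd : p ^ (n + 1) ∣ Nat.card G := by
    rw [← H.card_mul_index, hn, hk, ← pow_add]
    exact pow_dvd_pow p (by omega)
  obtain ⟨K, hK, hHK⟩ := Sylow.exists_subgroup_card_pow_succ hdvd hn
  refine ⟨K, hHK, Nat.eq_of_mul_eq_mul_left (pow_pos hp.pos n) ?_⟩
  rw [← pow_succ, ← hK, ← hn, ← relIndex_bot_left, ← relIndex_bot_left,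
    relIndex_mul_relIndex _ _ _ bot_le hHK]

end IsPGroup

theorem frattiniIter_le_of_index_eq {G : Type*} [Group G] [Finite G] (p : ℕ)
    [Fact p.Prime] (hG : IsPGroup p G) (H : Subgroup G) (m : ℕ)
    (hH : H.index = p ^ m) :
    frattiniIter (⊤ : Subgroup G) m ≤ H := by
  have hp : p.Prime := Fact.out
  induction m generalizing H with
  | zero => simp [Subgroup.index_eq_one.mp (hH.trans (pow_zero p))]
  | succ m ih =>
    have hHtop : H ≠ ⊤ := fun h =>
      (Nat.one_lt_pow m.succ_ne_zero hp.one_lt).ne' (by rw [← hH, h, Subgroup.index_top])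
    obtain ⟨K, hHK, hHK_rel⟩ := hG.exists_relIndex_eq_prime hHtop
    have hK : K.index = p ^ m := by
      have := Subgroup.relIndex_mul_index hHK
      rwa [hHK_rel, hH, pow_succ', Nat.mul_left_cancel_iff hp.pos] at this
    exact Subgroup.map_subtype_frattini_le_of_relIndex_dvd_prime hp
      (hHK_rel ▸ hG.relIndex_dvd_relIndex_of_le H (ih K hK))
end

section
/- Let G be a finite group and p a prime. If ε_p(G) = m, i.e., the largest p-exponent of a conjugacy class size of G is m, then a Sylow p-subgroup of G/Z(G) has Frattini length at most m (its m-th iterated Frattini subgroup is trivial). -/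
/-- `εₚ(G)`: the largest `p`-exponent of a conjugacy class size
(equivalently, of the index of a centralizer) in `G`. -/
noncomputable def epsP (p : ℕ) (G : Type*) [Group G] : ℕ :=
  sSup {k | ∃ x : G, ((Subgroup.centralizer {x}).index).factorization p = k}

/-!
Let `π : G → G ⧸ Z(G)`. For `y ∈ G` the subgroup `B = π(C_G(y))` has index `|G : C_G(y)|`,
whose `p`-part is at most `p ^ m`, so some Sylow `p`-subgroup `R` of `G ⧸ Z(G)` satisfies
`|R : R ∩ B| ≤ p ^ m`. In a `p`-group every maximal subgroup has index at least `p`, so passing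
from `R` to `Φ(R)`, which lies in a maximal subgroup above `R ∩ B`, shrinks this index by a
factor of at least `p`; hence `Φ_m(R) ≤ B`. Conjugating `R` onto `Q`, the preimage `W` of
`Φ_m(Q)` centralizes a conjugate of every `y ∈ G`. A finite group is not the union of the
conjugates of a proper subgroup, so `C_G(W) = G`, i.e. `W ≤ Z(G)` and `Φ_m(Q) = 1`.
-/

open Subgroup
open scoped Pointwise

section

variable {G : Type*} [Group G]

theorem frattiniIter_le (K : Subgroup G) (m : ℕ) : frattiniIter K m ≤ K := by
  induction m with
  | zero => exact le_rfl
  | succ m ih => exact (map_subtype_le _).trans ih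

theorem frattiniIter_succ' (K : Subgroup G) (m : ℕ) :
    frattiniIter K (m + 1) = frattiniIter (frattiniIter K 1) m := by
  induction m with
  | zero => rfl
  | succ m ih => rw [frattiniIter, ih]; rfl

theorem IsPGroup.relIndex_frattini_mul_le {p : ℕ} [Fact p.Prime] [Finite G]
    (hG : IsPGroup p G) {H : Subgroup G} (hH : H ≠ ⊤) :
    H.relIndex (frattini G) * p ≤ H.index := by
  obtain ⟨M, hM, hHM⟩ := (eq_top_or_exists_le_coatom H).resolve_left hH
  obtain ⟨n, hn⟩ := hG.index M
  have hn0 : n ≠ 0 := by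
    rintro rfl
    exact hM.1 (index_eq_one.mp (by simpa using hn))
  calc H.relIndex (frattini G) * p
      ≤ H.relIndex M * M.index := by
        gcongr
        · exact relIndex_le_of_le_right (frattini_le_coatom hM) index_ne_zero_of_finite
        · exact hn ▸ Nat.le_self_pow hn0 p
    _ = H.index := relIndex_mul_index hHM

theorem relIndex_frattiniIter_one (H K : Subgroup G) :
    H.relIndex (frattiniIter K 1) = (H.subgroupOf K).relIndex (frattini K) := by
  show H.relIndex ((frattini K).map K.subtype) = _
  rw [← relIndex_subgroupOf (map_subtype_le _)]
  exact congrArg _ (comap_map_eq_self_of_injective K.subtype_injective _)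

theorem IsPGroup.frattiniIter_le_of_relIndex_le {p : ℕ} [Fact p.Prime] [Finite G] (m : ℕ)
    {K H : Subgroup G} (hK : IsPGroup p K) (h : H.relIndex K ≤ p ^ m) :
    frattiniIter K m ≤ H := by
  induction m generalizing K with
  | zero =>
    show K ≤ H
    exact relIndex_eq_one.mp
      (le_antisymm (by simpa using h) (Nat.pos_of_ne_zero index_ne_zero_of_finite))
  | succ m ih =>
    by_cases hKH : K ≤ H
    · exact (frattiniIter_le K _).trans hKH
    rw [frattiniIter_succ']
    refine ih (hK.to_le (frattiniIter_le K 1))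
      (Nat.le_of_mul_le_mul_right ?_ (Fact.out : p.Prime).pos)
    calc H.relIndex (frattiniIter K 1) * p
        ≤ H.relIndex K := by
          rw [relIndex_frattiniIter_one]
          exact hK.relIndex_frattini_mul_le (mt subgroupOf_eq_top.mp hKH)
      _ ≤ p ^ m * p := by rwa [← pow_succ]

theorem Sylow.relIndex_dvd_index_of_map_subtype_le {p : ℕ} [hp : Fact p.Prime] [Finite G]
    {B : Subgroup G} (S : Sylow p B) (R : Sylow p G)
    (hSR : (S : Subgroup B).map B.subtype ≤ R) : B.relIndex R ∣ B.index := by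
  set S' := (S : Subgroup B).map B.subtype
  -- `|R : S'|` is a power of `p`, hence coprime to `|B : S|`
  have hmul : S'.relIndex R * (R : Subgroup G).index = (S : Subgroup B).index * B.index := by
    rw [relIndex_mul_index hSR, index_map_subtype]
  obtain ⟨n, hn⟩ := IsPGroup.iff_card.mp R.2
  have hS : p.Coprime (S : Subgroup B).index :=
    (Nat.Prime.coprime_iff_not_dvd hp.out).2 S.not_dvd_index
  have hcop : (S'.relIndex R).Coprime (S : Subgroup B).index :=
    (hS.pow_left n).coprime_dvd_left (hn ▸ relIndex_dvd_card _ _)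
  exact (relIndex_dvd_of_le_left _ (map_subtype_le _)).trans
    (hcop.dvd_of_dvd_mul_left (Dvd.intro _ hmul))

theorem Sylow.exists_relIndex_conj_smul_dvd_index {p : ℕ} [Fact p.Prime] [Finite G]
    (B : Subgroup G) (Q : Sylow p G) :
    ∃ g : G, (MulAut.conj g • B).relIndex Q ∣ B.index := by
  obtain ⟨S⟩ : Nonempty (Sylow p B) := inferInstance
  obtain ⟨R, hR⟩ := (S.2.map B.subtype).exists_le_sylow
  obtain ⟨g, rfl⟩ := MulAction.exists_smul_eq G R Q
  refine ⟨g, ?_⟩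
  rw [Sylow.coe_subgroup_smul, relIndex_pointwise_smul]
  exact S.relIndex_dvd_index_of_map_subtype_le R hR

theorem Sylow.exists_frattiniIter_le_conj_smul {p : ℕ} [hp : Fact p.Prime] [Finite G]
    {m : ℕ} (B : Subgroup G) (hB : B.index.factorization p ≤ m) (Q : Sylow p G) :
    ∃ g : G, frattiniIter (Q : Subgroup G) m ≤ MulAut.conj g • B := by
  obtain ⟨g, hg⟩ := Q.exists_relIndex_conj_smul_dvd_index B
  refine ⟨g, Q.2.frattiniIter_le_of_relIndex_le m ?_⟩
  obtain ⟨n, hn⟩ := IsPGroup.iff_card.mp Q.2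
  obtain ⟨j, -, hj⟩ := (Nat.dvd_prime_pow hp.out).1 (hn ▸ relIndex_dvd_card _ _)
  rw [hj] at hg ⊢
  have hj : j ≤ B.index.factorization p :=
    (hp.out.pow_dvd_iff_le_factorization index_ne_zero_of_finite).1 hg
  exact Nat.pow_le_pow_right hp.out.pos (hj.trans hB)

theorem Subgroup.eq_top_of_forall_exists_conj_mem [Finite G] {H : Subgroup G}
    (h : ∀ y : G, ∃ g : G, g * y * g⁻¹ ∈ H) : H = ⊤ := by
  classical
  by_contra hH
  -- The stabilizers of the points of `G ⧸ H` are the conjugates of `H`. They cover `G` and each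
  -- has index `|G : H|`, so the cover would have to be disjoint, which fails at `1`.
  have : Fintype (G ⧸ H) := Fintype.ofFinite _
  have hcover : ⋃ q ∈ (Finset.univ : Finset (G ⧸ H)),
      (1 : G) • (MulAction.stabilizer G q : Set G) = Set.univ := by
    refine Set.eq_univ_of_forall fun y => ?_
    obtain ⟨g, hg⟩ := h y
    simp only [Finset.mem_univ, Set.iUnion_true, one_smul, Set.mem_iUnion, SetLike.mem_coe]
    refine ⟨(g⁻¹ : G), ?_⟩
    rw [MulAction.mem_stabilizer_iff, MulAction.Quotient.smul_mk, QuotientGroup.eq]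
    simpa [mul_assoc] using H.inv_mem hg
  have hsum : ∑ q : G ⧸ H, ((MulAction.stabilizer G q).index : ℚ)⁻¹ = 1 := by
    simp only [MulAction.index_stabilizer_of_transitive, Finset.sum_const, Finset.card_univ,
      nsmul_eq_mul, ← Nat.card_eq_fintype_card]
    exact mul_inv_cancel₀ (by simp)
  have hdisj := pairwiseDisjoint_leftCoset_cover_of_sum_inv_index_eq_one hcover hsum
  have : Nontrivial (G ⧸ H) :=
    Finite.one_lt_card_iff_nontrivial.1 (index_eq_card H ▸ one_lt_index_of_ne_top hH)
  obtain ⟨q₁, q₂, hq⟩ := exists_pair_ne (G ⧸ H)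
  have hfin (q : G ⧸ H) : (MulAction.stabilizer G q).FiniteIndex :=
    finiteIndex_of_finite_quotient
  exact Set.disjoint_left.1 (hdisj (by simpa using hfin q₁) (by simpa using hfin q₂) hq)
    (show (1 : G) ∈ _ by simp [one_mem]) (by simp [one_mem])

theorem factorization_index_centralizer_le_epsP [Finite G] (p : ℕ) (x : G) :
    (centralizer {x}).index.factorization p ≤ epsP p G :=
  le_csSup (Set.finite_range _).bddAbove ⟨x, rfl⟩

end

theorem frattiniIter_sylow_quotient_center_eq_bot {G : Type*} [Group G] [Finite G]
    (p : ℕ) [Fact p.Prime] (m : ℕ) (hm : epsP p G = m)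
    (Q : Sylow p (G ⧸ Subgroup.center G)) :
    frattiniIter (Q : Subgroup (G ⧸ Subgroup.center G)) m = ⊥ := by
  set π := QuotientGroup.mk' (center G)
  have hπ : Function.Surjective π := QuotientGroup.mk'_surjective _
  set W := (frattiniIter (Q : Subgroup (G ⧸ center G)) m).comap π
  have hW : centralizer (W : Set G) = ⊤ := by
    refine eq_top_of_forall_exists_conj_mem fun y => ?_
    have hker : π.ker ≤ centralizer {y} := by
      rw [QuotientGroup.ker_mk']
      exact center_le_centralizer {y}
    obtain ⟨a, hQ⟩ := Q.exists_frattiniIter_le_conj_smul ((centralizer {y}).map π)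
      (index_map_eq _ hπ hker ▸ hm ▸ factorization_index_centralizer_le_epsP p y)
    obtain ⟨g, rfl⟩ := hπ a
    refine ⟨g, mem_centralizer_iff.2 fun x hx => ?_⟩
    have hconj : g⁻¹ * x * g ∈ centralizer {y} := by
      rw [← comap_map_eq_self hker, mem_comap]
      simpa [mem_pointwise_smul_iff_inv_smul_mem, mul_assoc] using hQ hx
    calc x * (g * y * g⁻¹) = g * (g⁻¹ * x * g * y) * g⁻¹ := by group
      _ = g * y * g⁻¹ * x := by rw [mem_centralizer_singleton_iff.1 hconj]; group
  rw [← map_comap_eq_self_of_surjective hπ (frattiniIter _ m), Subgroup.map_eq_bot_iff,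
    QuotientGroup.ker_mk']
  exact centralizer_eq_top_iff_subset.1 hW
end

section
/- Let N be a normal subgroup of a finite group G and π a set of primes. Then ε_π(G/N) ≤ ε_π(G). If moreover N is a proper π-subgroup of G with C_G(N) ≤ N, then ε_π(G/N) < ε_π(G). -/
/-- `n` is a `π`-number: every prime divisor of `n` lies in `π`. -/
def IsPiNumber (π : Finset ℕ) (n : ℕ) : Prop := ∀ p : ℕ, p.Prime → p ∣ n → p ∈ π

/-- `n` is a `π'`-number: no prime divisor of `n` lies in `π`. -/
def IsPiPrimeNumber (π : Finset ℕ) (n : ℕ) : Prop := ∀ p : ℕ, p.Prime → p ∣ n → p ∉ π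

/-- The `π`-exponent of `n`: the sum of the exponents of the primes of `π`
in the factorization of `n` (so `p₁^{k₁}⋯p_s^{k_s}` is the `π`-part of `n`
and the `π`-exponent is `k₁ + ⋯ + k_s`). -/
def piExp (π : Finset ℕ) (n : ℕ) : ℕ :=
  ∑ p ∈ n.primeFactors.filter (· ∈ π), n.factorization p

/-- `ε_π(G)`: the largest `π`-exponent of a conjugacy class size in `G`. -/
noncomputable def epsPi (π : Finset ℕ) (G : Type*) [Group G] : ℕ :=
  sSup {k | ∃ x : G, piExp π (Subgroup.centralizer {x}).index = k}

/-- A group is `π`-separable if it has a normal series each of whose factors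
is a `π`-group or a `π'`-group. -/
def PiSeparable (π : Finset ℕ) (G : Type*) [Group G] : Prop :=
  ∃ (n : ℕ) (H : ℕ → Subgroup G), H 0 = ⊥ ∧ H n = ⊤ ∧
    (∀ i, H i ≤ H (i + 1)) ∧ (∀ i, (H i).Normal) ∧
    ∀ i < n,
      IsPiNumber π (Nat.card (↥(H (i + 1)) ⧸ (H i).subgroupOf (H (i + 1)))) ∨
      IsPiPrimeNumber π (Nat.card (↥(H (i + 1)) ⧸ (H i).subgroupOf (H (i + 1))))

/-! For `C = C_G(x)` and `K` the preimage of `C_{G/N}(xN)` we have `C ≤ K` and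
`|G : C| = |G/N : C_{G/N}(xN)| · |K : C|`, which gives the inequality. If moreover `N` is a normal
`π`-subgroup with `N ≰ C`, then `|K : C|` is divisible by `|CN : C| = |N : N ∩ C| ≠ 1`, a divisor
of `|N|`, so it has a prime factor in `π`. When `N` is proper and `C_G(N) ≤ N`, `ε_π(G/N)` is
attained at some `xN ≠ 1`; then `x ∉ N ⊇ C_G(N)`, so `N ≰ C_G(x)`. -/

lemma piExp_eq_sum (π : Finset ℕ) (n : ℕ) : piExp π n = ∑ p ∈ π, n.factorization p := by
  refine Finset.sum_subset (fun p hp => (Finset.mem_filter.mp hp).2) fun p hpπ hp => ?_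
  by_contra h
  exact hp (Finset.mem_filter.mpr
    ⟨Nat.support_factorization n ▸ Finsupp.mem_support_iff.mpr h, hpπ⟩)

lemma piExp_mul (π : Finset ℕ) {m n : ℕ} (hm : m ≠ 0) (hn : n ≠ 0) :
    piExp π (m * n) = piExp π m + piExp π n := by
  simp only [piExp_eq_sum, Nat.factorization_mul hm hn, Finsupp.add_apply, Finset.sum_add_distrib]

lemma one_le_piExp_of_dvd (π : Finset ℕ) {p n : ℕ} (hp : p.Prime) (hpπ : p ∈ π) (hpn : p ∣ n)
    (hn : n ≠ 0) : 1 ≤ piExp π n := by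
  rw [piExp_eq_sum]
  calc 1 ≤ n.factorization p := hp.factorization_pos_of_dvd hn hpn
    _ ≤ _ := Finset.single_le_sum (fun q _ => Nat.zero_le _) hpπ

section epsPi

variable (π : Finset ℕ) {H : Type*} [Group H] [Finite H]

lemma le_epsPi (x : H) : piExp π (Subgroup.centralizer {x}).index ≤ epsPi π H :=
  le_csSup (Set.finite_range _).bddAbove ⟨x, rfl⟩

lemma exists_piExp_eq_epsPi : ∃ x : H, piExp π (Subgroup.centralizer {x}).index = epsPi π H :=
  Nat.sSup_mem (Set.range_nonempty _) (Set.finite_range _).bddAbove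

lemma exists_ne_one_piExp_eq_epsPi [Nontrivial H] :
    ∃ x : H, x ≠ 1 ∧ piExp π (Subgroup.centralizer {x}).index = epsPi π H := by
  obtain ⟨x, hx⟩ := exists_piExp_eq_epsPi π (H := H)
  by_cases hx1 : x = 1
  · obtain ⟨y, hy⟩ := exists_ne (1 : H)
    have hε : epsPi π H = 0 := by
      rw [← hx, hx1, Subgroup.centralizer_eq_top_iff_subset.mpr (by simp), Subgroup.index_top]
      simp [piExp]
    exact ⟨y, hy, le_antisymm (le_epsPi π y) (hε ▸ Nat.zero_le _)⟩
  · exact ⟨x, hx1, hx⟩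

end epsPi

namespace Subgroup

variable {G : Type*} [Group G]

lemma relIndex_sup_of_normal (H N : Subgroup G) [N.Normal] (hNH : N.relIndex H ≠ 0) :
    H.relIndex (H ⊔ N) = H.relIndex N := by
  have hprod := relIndex_inf_mul_relIndex H N (H ⊔ N)
  rw [inf_eq_left.mpr le_sup_right, relIndex_sup_right,
    ← relIndex_mul_relIndex _ _ _ inf_le_left le_sup_left, inf_relIndex_left] at hprod
  exact (Nat.eq_of_mul_eq_mul_right (Nat.pos_of_ne_zero hNH) (hprod.trans (mul_comm _ _))).symm

lemma one_le_piExp_relIndex [Finite G] (π : Finset ℕ) {C K N : Subgroup G} [N.Normal]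
    (hN : IsPiNumber π (Nat.card N)) (hNC : ¬ N ≤ C) (hCK : C ≤ K) (hNK : N ≤ K) :
    1 ≤ piExp π (C.relIndex K) := by
  obtain ⟨p, hp, hpN⟩ := Nat.exists_prime_and_dvd (mt relIndex_eq_one.mp hNC)
  have hNsup : C.relIndex N ∣ C.relIndex K := by
    rw [← relIndex_sup_of_normal C N index_ne_zero_of_finite,
      ← relIndex_mul_relIndex C (C ⊔ N) K le_sup_left (sup_le hCK hNK)]
    exact dvd_mul_right _ _
  exact one_le_piExp_of_dvd π hp (hN p hp (hpN.trans (relIndex_dvd_card C N))) (hpN.trans hNsup)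
    index_ne_zero_of_finite

variable {N : Subgroup G} [N.Normal]

lemma centralizer_le_comap_centralizer_mk (x : G) :
    centralizer {x} ≤ (centralizer {(x : G ⧸ N)}).comap (QuotientGroup.mk' N) := by
  rw [← map_le_iff_le_comap]
  simpa using map_centralizer_le_centralizer_image {x} (QuotientGroup.mk' N)

lemma piExp_index_centralizer_mk_add [Finite G] (π : Finset ℕ) (x : G) :
    piExp π (centralizer {(x : G ⧸ N)}).index +
        piExp π ((centralizer {x}).relIndex
          ((centralizer {(x : G ⧸ N)}).comap (QuotientGroup.mk' N))) =
      piExp π (centralizer {x}).index := by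
  rw [← relIndex_mul_index (centralizer_le_comap_centralizer_mk (N := N) x),
    index_comap_of_surjective _ (QuotientGroup.mk'_surjective N),
    piExp_mul π (by exact index_ne_zero_of_finite) index_ne_zero_of_finite, add_comm]

end Subgroup

theorem epsPi_quotient_le {G : Type*} [Group G] [Finite G] (π : Finset ℕ)
    (N : Subgroup G) [N.Normal] :
    epsPi π (G ⧸ N) ≤ epsPi π G ∧
      (N ≠ ⊤ → IsPiNumber π (Nat.card N) →
        Subgroup.centralizer (N : Set G) ≤ N → epsPi π (G ⧸ N) < epsPi π G) := by
  constructor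
  · obtain ⟨x, hx⟩ := exists_piExp_eq_epsPi π (H := G ⧸ N)
    obtain ⟨x, rfl⟩ := QuotientGroup.mk_surjective x
    rw [← hx]
    exact (Nat.le_add_right _ _).trans
      ((Subgroup.piExp_index_centralizer_mk_add π x).trans_le (le_epsPi π x))
  · intro hNtop hπN hCN
    have := QuotientGroup.nontrivial_iff.mpr hNtop
    obtain ⟨x, hx1, hx⟩ := exists_ne_one_piExp_eq_epsPi π (H := G ⧸ N)
    obtain ⟨x, rfl⟩ := QuotientGroup.mk_surjective x
    have hNC : ¬ N ≤ Subgroup.centralizer {x} := fun h =>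
      hx1 <| (QuotientGroup.eq_one_iff x).mpr <| hCN <| Subgroup.mem_centralizer_iff.mpr
        fun n hn => Subgroup.mem_centralizer_singleton_iff.mp (h hn)
    have hgain := Subgroup.one_le_piExp_relIndex π hπN hNC
      (Subgroup.centralizer_le_comap_centralizer_mk x)
      ((QuotientGroup.ker_mk' N).ge.trans (MonoidHom.ker_le_comap _ _))
    rw [← hx]
    exact (Nat.lt_add_of_pos_right hgain).trans_le
      ((Subgroup.piExp_index_centralizer_mk_add π x).trans_le (le_epsPi π x))
end

section
/- Let G be a finite group, p a prime, and suppose every conjugacy class of G has size coprime to p. Then every Sylow p-subgroup of G lies in the center Z(G). -/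
open Subgroup MulAction Pointwise

theorem aux_cover {G : Type*} [Group G] [Finite G] (H : Subgroup G)
    (hc : ∀ g : G, ∃ c : G, c * g * c⁻¹ ∈ H) : H = ⊤ := by
  classical
  cases nonempty_fintype G
  have hfinq : Fintype (G ⧸ H) := Fintype.ofFinite _
  have hΩ : Fintype (orbitRel.Quotient G (G ⧸ H)) := Fintype.ofFinite _
  have burnside := MulAction.sum_card_fixedBy_eq_card_orbits_mul_card_group G (G ⧸ H)
  have hsub : Subsingleton (orbitRel.Quotient G (G ⧸ H)) :=
    (MulAction.pretransitive_iff_subsingleton_quotient G (G ⧸ H)).1 inferInstance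
  have hcard1 : Fintype.card (orbitRel.Quotient G (G ⧸ H)) = 1 := by
    have hne : Nonempty (orbitRel.Quotient G (G ⧸ H)) := inferInstance
    exact Fintype.card_eq_one_iff.2 ⟨Classical.arbitrary _, fun b => Subsingleton.elim _ _⟩
  rw [hcard1, one_mul] at burnside
  have hge : ∀ g : G, 1 ≤ Fintype.card (fixedBy (G ⧸ H) g) := by
    intro g
    obtain ⟨c, hcg⟩ := hc g⁻¹
    refine Fintype.card_pos_iff.2 ⟨⟨(c⁻¹ : G), ?_⟩⟩
    show g • (QuotientGroup.mk c⁻¹ : G ⧸ H) = QuotientGroup.mk c⁻¹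
    show (QuotientGroup.mk (g * c⁻¹) : G ⧸ H) = QuotientGroup.mk c⁻¹
    rw [QuotientGroup.eq]
    simpa [mul_assoc] using hcg
  have hfix1 : Fintype.card (fixedBy (G ⧸ H) (1 : G)) = H.index := by
    rw [Subgroup.index_eq_card, Nat.card_eq_fintype_card]
    exact Fintype.card_congr
      ((Equiv.setCongr (fixedBy_one_eq_univ (G ⧸ H) G)).trans (Equiv.Set.univ _))
  have key : H.index + (Fintype.card G - 1) ≤ Fintype.card G := by
    calc H.index + (Fintype.card G - 1)
        = Fintype.card (fixedBy (G ⧸ H) (1 : G)) + ∑ g ∈ (Finset.univ : Finset G).erase (1 : G), 1 := by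
          rw [hfix1, Finset.sum_const, smul_eq_mul, mul_one,
            Finset.card_erase_of_mem (Finset.mem_univ _), Finset.card_univ]
      _ ≤ Fintype.card (fixedBy (G ⧸ H) (1 : G)) +
            ∑ g ∈ (Finset.univ : Finset G).erase (1 : G), Fintype.card (fixedBy (G ⧸ H) g) := by
          gcongr with g hg
          exact hge g
      _ = ∑ g : G, Fintype.card (fixedBy (G ⧸ H) g) :=
          (Finset.add_sum_erase (Finset.univ : Finset G) (fun g => Fintype.card (fixedBy (G ⧸ H) g)) (Finset.mem_univ (1 : G)))
      _ = Fintype.card G := burnside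
  have hcpos : 1 ≤ Fintype.card G := Fintype.card_pos
  have : H.index ≤ 1 := by omega
  have hne : H.index ≠ 0 := H.index_ne_zero_of_finite
  exact Subgroup.index_eq_one.mp (by omega)

theorem sylow_le_center_of_classes_coprime {G : Type*} [Group G] [Finite G]
    (p : ℕ) [Fact p.Prime]
    (h : ∀ x : G, ¬ p ∣ (Subgroup.centralizer {x}).index)
    (P : Sylow p G) :
    (P : Subgroup G) ≤ Subgroup.center G := by
  classical
  have key : Subgroup.centralizer ((P : Subgroup G) : Set G) = ⊤ := by
    apply aux_cover
    intro g
    -- the centralizer of g contains a Sylow p-subgroup of G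
    set C := Subgroup.centralizer ({g} : Set G) with hC
    obtain ⟨Q⟩ : Nonempty (Sylow p C) := inferInstance
    have hQp : IsPGroup p ((Q : Subgroup C).map C.subtype) := Q.2.map _
    have hQi : ¬ p ∣ ((Q : Subgroup C).map C.subtype).index := by
      rw [Subgroup.index_map_subtype]
      rw [Nat.Prime.dvd_mul (Fact.out : p.Prime)]
      push_neg
      exact ⟨Sylow.not_dvd_index Q, h g⟩
    let R : Sylow p G := hQp.toSylow hQi
    have hRle : (R : Subgroup G) ≤ C := by
      have : (R : Subgroup G) = (Q : Subgroup C).map C.subtype := hQp.toSylow_coe hQi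
      rw [this]
      exact Subgroup.map_subtype_le _
    obtain ⟨c, hc⟩ := MulAction.exists_smul_eq G R P
    refine ⟨c, ?_⟩
    rw [Subgroup.mem_centralizer_iff]
    intro y hy
    have hy' : y ∈ (c • R : Sylow p G) := by rw [hc]; exact hy
    have hy2 : y ∈ MulAut.conj c • (R : Set G) := by
      rw [← Sylow.coe_smul]; exact hy'
    obtain ⟨r, hr, rfl⟩ := hy2
    have hrC : r ∈ C := hRle hr
    have hrg : g * r = r * g := (Subgroup.mem_centralizer_iff.mp hrC) g rfl
    show c * r * c⁻¹ * (c * g * c⁻¹) = c * g * c⁻¹ * (c * r * c⁻¹)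
    rw [show c * r * c⁻¹ * (c * g * c⁻¹) = c * (r * g) * c⁻¹ by group,
      show c * g * c⁻¹ * (c * r * c⁻¹) = c * (g * r) * c⁻¹ by group, hrg]
  intro x hx
  rw [Subgroup.mem_center_iff]
  intro g
  have : g ∈ Subgroup.centralizer ((P : Subgroup G) : Set G) := key ▸ Subgroup.mem_top g
  exact ((Subgroup.mem_centralizer_iff.mp this) x hx).symm
end
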